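/- arXiv:2310.19017 — 4 statements merged into one kernel-verified Lean document; each statement's English description precedes it below -/
import Mathlib

section
/- Let G be a finite abelian group generated by S = {s, s'} ⊆ G \ {0} with s ≠ s', and let C be a perfect code of the Cayley digraph Cay(G,S). If x ∈ C, then none of x + s, x + 2s, x + s', x + 2s' belongs to C. -/
/-- Arc relation of the Cayley digraph `Cay(G,S)`: `(x,y)` is an arc iff `y - x ∈ S`. -/
def cayArc {G : Type*} [AddGroup G] (S : Set G) (x y : G) : Prop := y - x ∈ S

/-- `C` is a perfect code of the digraph with arc relation `arc`:
every vertex is dominated by exactly one element of `C`. -/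
def IsPerfectCode {V : Type*} (arc : V → V → Prop) (C : Set V) : Prop :=
  ∀ v : V, ∃! u : V, u ∈ C ∧ (u = v ∨ arc u v)

/-- Arc relation of the digraph `Γ_{m,l,h}` on vertex set `ZMod m × Fin l`. -/
def gammaArc (m l h : ℕ) (x y : ZMod m × Fin l) : Prop :=
  (y.1 = x.1 + 1 ∧ y.2 = x.2) ∨
  (y.1 = x.1 ∧ (y.2 : ℕ) = (x.2 : ℕ) + 1) ∨
  ((x.2 : ℕ) = l - 1 ∧ y.1 = x.1 - (h : ZMod m) ∧ (y.2 : ℕ) = 0)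

/-- Two digraphs (given by their arc relations) are isomorphic. -/
def DigraphIso {V W : Type*} (arcV : V → V → Prop) (arcW : W → W → Prop) : Prop :=
  ∃ e : V ≃ W, ∀ x y : V, arcV x y ↔ arcW (e x) (e y)

/-- The set `C_r = {((3r + t + n(l-h)) mod m, t) : n ∈ ℤ, t ∈ [l]}`. -/
def Cr (m l h : ℕ) (r : ℕ) : Set (ZMod m × Fin l) :=
  {x | ∃ (n : ℤ) (t : Fin l),
    x = (((3 * (r : ℤ) + (t : ℕ) + n * ((l : ℤ) - (h : ℤ))) : ZMod m), t)}


/-! The vertices `x + s` and `x + s'` are dominated by `x ∈ C`, so neither lies in `C`;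
hence `x + s + s'`, whose only other dominators are these two, lies in `C`. Now `x + 2s`
cannot lie in `C`, since `x + s + s'` already dominates `x + 2s + s'`; symmetrically for
`x + 2s'`. -/

theorem IsPerfectCode.eq_of_dominate {V : Type*} {arc : V → V → Prop} {C : Set V}
    (hC : IsPerfectCode arc C) {u u' v : V} (hu : u ∈ C) (huv : u = v ∨ arc u v)
    (hu' : u' ∈ C) (hu'v : u' = v ∨ arc u' v) : u = u' :=
  (hC v).unique ⟨hu, huv⟩ ⟨hu', hu'v⟩

theorem IsPerfectCode.notMem_of_arc {V : Type*} {arc : V → V → Prop} {C : Set V}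
    (hC : IsPerfectCode arc C) {u v : V} (hu : u ∈ C) (huv : arc u v) (hne : u ≠ v) :
    v ∉ C :=
  fun hv => hne (hC.eq_of_dominate hu (Or.inr huv) hv (Or.inl rfl))

theorem IsPerfectCode.add_notMem_of_cayArc {G : Type*} [AddCommGroup G] {S C : Set G}
    (hC : IsPerfectCode (cayArc S) C) {a : G} (ha : a ∈ S) (ha0 : a ≠ 0) {x : G}
    (hx : x ∈ C) : x + a ∉ C :=
  hC.notMem_of_arc hx (by simpa [cayArc] using ha) (by simpa using ha0)

section TwoGenerators

variable {G : Type*} [AddCommGroup G] {s s' : G} {C : Set G}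

theorem cayArc_pair_iff {u v : G} : cayArc {s, s'} u v ↔ v = u + s ∨ v = u + s' := by
  simp only [cayArc, Set.mem_insert_iff, Set.mem_singleton_iff, sub_eq_iff_eq_add']

theorem IsPerfectCode.add_add_mem_of_cayArc_pair (hC : IsPerfectCode (cayArc {s, s'}) C)
    (hs : s ≠ 0) (hs' : s' ≠ 0) {x : G} (hx : x ∈ C) : x + s + s' ∈ C := by
  obtain ⟨u, ⟨hu, rfl | harc⟩, -⟩ := hC (x + s + s')
  · exact hu
  rcases cayArc_pair_iff.1 harc with h | h
  · have hu_eq : u = x + s' := add_right_cancel (h.symm.trans (add_right_comm x s s'))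
    exact (hC.add_notMem_of_cayArc (by simp) hs' hx (hu_eq ▸ hu)).elim
  · have hu_eq : u = x + s := add_right_cancel h.symm
    exact (hC.add_notMem_of_cayArc (by simp) hs hx (hu_eq ▸ hu)).elim

theorem IsPerfectCode.add_two_nsmul_notMem_of_cayArc_pair
    (hC : IsPerfectCode (cayArc {s, s'}) C) (hs : s ≠ 0) (hs' : s' ≠ 0) (hne : s ≠ s')
    {x : G} (hx : x ∈ C) : x + 2 • s ∉ C := by
  intro h
  have hdom₁ : cayArc {s, s'} (x + s + s') (x + 2 • s + s') :=
    cayArc_pair_iff.2 (Or.inl (by abel))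
  have hdom₂ : cayArc {s, s'} (x + 2 • s) (x + 2 • s + s') :=
    cayArc_pair_iff.2 (Or.inr rfl)
  have heq : x + s + s' = x + s + s :=
    (hC.eq_of_dominate (hC.add_add_mem_of_cayArc_pair hs hs' hx) (Or.inr hdom₁) h
      (Or.inr hdom₂)).trans (by rw [two_nsmul, add_assoc])
  exact hne (add_left_cancel heq).symm

end TwoGenerators

theorem statement6_general {G : Type*} [AddCommGroup G] (s s' : G)
    (hs : s ≠ 0) (hs' : s' ≠ 0) (hne : s ≠ s')
    (C : Set G) (hC : IsPerfectCode (cayArc {s, s'}) C)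
    (x : G) (hx : x ∈ C) :
    x + s ∉ C ∧ x + 2 • s ∉ C ∧ x + s' ∉ C ∧ x + 2 • s' ∉ C := by
  have hC' : IsPerfectCode (cayArc {s', s}) C := Set.pair_comm s s' ▸ hC
  exact ⟨hC.add_notMem_of_cayArc (by simp) hs hx,
    hC.add_two_nsmul_notMem_of_cayArc_pair hs hs' hne hx,
    hC.add_notMem_of_cayArc (by simp) hs' hx,
    hC'.add_two_nsmul_notMem_of_cayArc_pair hs' hs hne.symm hx⟩

theorem statement6 {G : Type*} [AddCommGroup G] [Fintype G] (s s' : G)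
    (hs : s ≠ 0) (hs' : s' ≠ 0) (hne : s ≠ s')
    (hgen : AddSubgroup.closure {s, s'} = ⊤)
    (C : Set G) (hC : IsPerfectCode (cayArc {s, s'}) C)
    (x : G) (hx : x ∈ C) :
    x + s ∉ C ∧ x + 2 • s ∉ C ∧ x + s' ∉ C ∧ x + 2 • s' ∉ C :=
  statement6_general s s' hs hs' hne C hC x hx
end

section
/- Let G be a finite abelian group generated by S = {s, s'} ⊆ G \ {0} with s ≠ s', and suppose the Cayley digraph Cay(G,S) admits a perfect code. If h and l are integers with 0 ≤ h ≤ ord(s), 0 ≤ l ≤ ord(s'), and h·s + l·s' = 0, then 3 ∣ (l − h). -/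
/-!
The closed out-neighbourhoods `{c, c + s, c + s'}` of the code words tile `G`. Comparing the
tiles that cover `c + s + s'` and `c` shows that the code is invariant under translation by
`s + s'`. Hence the phase `G → ZMod 3` recording whether a vertex lies in `C`, `C + s` or
`C + s'` rises by `1` along `s` and falls by `1` along `s'`, so `h • s + l • s' = 0` forces
`h ≡ l (mod 3)`.
-/

section

variable {G : Type*} [AddCommGroup G]

theorem isPerfectCode_cayArc_iff {S C : Set G} :
    IsPerfectCode (cayArc S) C ↔ ∀ v, ∃! t, t ∈ insert 0 S ∧ v - t ∈ C := by
  refine forall_congr' fun v => (Equiv.subLeft v).existsUnique_congr_left.trans ?_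
  simp [cayArc, neg_add_eq_sub, sub_eq_self, and_comm]

open Classical in
noncomputable def codePhase (C : Set G) (s v : G) : ZMod 3 :=
  if v ∈ C then 0 else if v - s ∈ C then 1 else 2

namespace IsPerfectCode

section cayArc

variable {S C : Set G} (hC : IsPerfectCode (cayArc S) C)
include hC

theorem exists_sub_mem (v : G) : ∃ t ∈ insert 0 S, v - t ∈ C :=
  ((isPerfectCode_cayArc_iff.mp hC v).exists).imp fun _ h => ⟨h.1, h.2⟩

theorem eq_of_sub_mem {v t t' : G} (ht : t ∈ insert 0 S) (ht' : t' ∈ insert 0 S)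
    (hv : v - t ∈ C) (hv' : v - t' ∈ C) : t = t' :=
  (isPerfectCode_cayArc_iff.mp hC v).unique ⟨ht, hv⟩ ⟨ht', hv'⟩

theorem eq_zero_of_mem_of_sub_mem {v t : G} (ht : t ∈ insert 0 S) (hv : v ∈ C)
    (hvt : v - t ∈ C) : t = 0 :=
  hC.eq_of_sub_mem ht (Set.mem_insert 0 S) hvt (by simpa using hv)

end cayArc

variable {s s' : G} {C : Set G} (hC : IsPerfectCode (cayArc {s, s'}) C)
include hC

theorem add_add_mem_of_mem (hs : s ≠ 0) (hs' : s' ≠ 0) {c : G} (hc : c ∈ C) :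
    c + s + s' ∈ C := by
  obtain ⟨t, ht, hct⟩ := hC.exists_sub_mem (c + s + s')
  simp only [Set.mem_insert_iff] at ht
  rcases ht with ht | ht | ht <;> subst t
  · simpa using hct
  · refine absurd (hC.eq_zero_of_mem_of_sub_mem (v := c + s') (by simp) ?_ (by simpa)) hs'
    convert hct using 1; abel
  · refine absurd (hC.eq_zero_of_mem_of_sub_mem (v := c + s) (by simp) ?_ (by simpa)) hs
    convert hct using 1; abel

theorem mem_of_add_add_mem (hs : s ≠ 0) (hs' : s' ≠ 0) {c : G} (hc : c + s + s' ∈ C) :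
    c ∈ C := by
  obtain ⟨t, ht, hct⟩ := hC.exists_sub_mem c
  simp only [Set.mem_insert_iff] at ht
  rcases ht with ht | ht | ht <;> subst t
  · simpa using hct
  · refine absurd (hC.eq_zero_of_mem_of_sub_mem (by simp) hc ?_) hs
    convert hC.add_add_mem_of_mem hs hs' hct using 1; abel
  · refine absurd (hC.eq_zero_of_mem_of_sub_mem (by simp) hc ?_) hs'
    convert hC.add_add_mem_of_mem hs hs' hct using 1; abel

theorem add_add_mem_iff (hs : s ≠ 0) (hs' : s' ≠ 0) {c : G} : c + s + s' ∈ C ↔ c ∈ C :=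
  ⟨hC.mem_of_add_add_mem hs hs', hC.add_add_mem_of_mem hs hs'⟩

theorem codePhase_add_add (hs : s ≠ 0) (hs' : s' ≠ 0) (v : G) :
    codePhase C s (v + s + s') = codePhase C s v := by
  rw [codePhase, codePhase, hC.add_add_mem_iff hs hs',
    show v + s + s' - s = v - s + s + s' by abel, hC.add_add_mem_iff hs hs']

theorem codePhase_add_left (hs : s ≠ 0) (hs' : s' ≠ 0) (hne : s ≠ s') (v : G) :
    codePhase C s (v + s) = codePhase C s v + 1 := by
  have hs_mem : s ∈ insert 0 ({s, s'} : Set G) := by simp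
  rw [codePhase, codePhase, add_sub_cancel_right]
  by_cases hv : v ∈ C
  · rw [if_pos hv, if_neg fun h => hs (hC.eq_zero_of_mem_of_sub_mem hs_mem h (by simpa)),
      if_pos hv]
    decide
  by_cases hvs : v - s ∈ C
  · have hvs' : v + s ∉ C := fun h => hne <| hC.eq_of_sub_mem hs_mem (by simp) hvs <|
      hC.mem_of_add_add_mem hs hs' (by convert h using 1; abel)
    rw [if_neg hvs', if_neg hv, if_neg hv, if_pos hvs]
    decide
  · have hvs' : v - s' ∈ C := by
      obtain ⟨t, ht, hvt⟩ := hC.exists_sub_mem v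
      simp only [Set.mem_insert_iff] at ht
      rcases ht with rfl | rfl | rfl
      · exact absurd (by simpa using hvt) hv
      · exact absurd hvt hvs
      · exact hvt
    have : v + s ∈ C := by convert hC.add_add_mem_of_mem hs hs' hvs' using 1; abel
    rw [if_pos this, if_neg hv, if_neg hvs]
    decide

theorem codePhase_add_right (hs : s ≠ 0) (hs' : s' ≠ 0) (hne : s ≠ s') (v : G) :
    codePhase C s (v + s') = codePhase C s v - 1 := by
  rw [eq_sub_iff_add_eq, ← hC.codePhase_add_left hs hs' hne, add_right_comm,
    hC.codePhase_add_add hs hs']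

theorem codePhase_add_nsmul_left (hs : s ≠ 0) (hs' : s' ≠ 0) (hne : s ≠ s') (v : G)
    (n : ℕ) : codePhase C s (v + n • s) = codePhase C s v + n := by
  induction n with
  | zero => simp
  | succ n ih =>
    rw [succ_nsmul, ← add_assoc, hC.codePhase_add_left hs hs' hne, ih]
    push_cast; ring

theorem codePhase_add_nsmul_right (hs : s ≠ 0) (hs' : s' ≠ 0) (hne : s ≠ s') (v : G)
    (n : ℕ) : codePhase C s (v + n • s') = codePhase C s v - n := by
  induction n with
  | zero => simp
  | succ n ih =>
    rw [succ_nsmul, ← add_assoc, hC.codePhase_add_right hs hs' hne, ih]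
    push_cast; ring

end IsPerfectCode

end

theorem statement8_general {G : Type*} [AddCommGroup G] (s s' : G)
    (hs : s ≠ 0) (hs' : s' ≠ 0) (hne : s ≠ s')
    (hC : ∃ C : Set G, IsPerfectCode (cayArc {s, s'}) C)
    (h l : ℕ)
    (heq : h • s + l • s' = 0) :
    (3 : ℤ) ∣ ((l : ℤ) - (h : ℤ)) := by
  obtain ⟨C, hC⟩ := hC
  have hphase : codePhase C s 0 = codePhase C s 0 + h - l := by
    rw [← hC.codePhase_add_nsmul_left hs hs' hne, ← hC.codePhase_add_nsmul_right hs hs' hne,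
      zero_add, heq]
  have hmod : (((l : ℤ) - h : ℤ) : ZMod 3) = 0 := by
    push_cast
    linear_combination hphase
  exact_mod_cast (ZMod.intCast_zmod_eq_zero_iff_dvd _ 3).mp hmod

theorem statement8 {G : Type*} [AddCommGroup G] [Fintype G] (s s' : G)
    (hs : s ≠ 0) (hs' : s' ≠ 0) (hne : s ≠ s')
    (hgen : AddSubgroup.closure {s, s'} = ⊤)
    (hC : ∃ C : Set G, IsPerfectCode (cayArc {s, s'}) C)
    (h l : ℕ) (hh : h ≤ addOrderOf s) (hl : l ≤ addOrderOf s')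
    (heq : h • s + l • s' = 0) :
    (3 : ℤ) ∣ ((l : ℤ) - (h : ℤ)) :=
  statement8_general s s' hs hs' hne hC h l heq
end

section
/- Let m, l be positive integers and h an integer with 0 ≤ h < m such that 3 ∣ m and 3 ∣ (l − h), and set b = gcd(l − h, m). For r ∈ {0,1,…,b/3 − 1} let C_r = {((3r + t + n(l − h)) mod m, t) : n ∈ ℤ, t ∈ {0,…,l−1}} ⊆ ℤ_m × {0,…,l−1}. Then C_r ∩ C_{r'} = ∅ for all distinct r, r' ∈ {0,1,…,b/3 − 1}, and consequently the union C = ⋃_{r ∈ {0,…,b/3 − 1}} C_r has cardinality m·l/3. -/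
/-!
By Bézout, the first coordinates `3r + t + n(l - h) mod m` are exactly the residues congruent to
`3r + t` modulo `b = gcd(l - h, m)`, so `(a, t) ∈ C_r` iff `b ∣ a - t - 3r`. For `r < b/3` the
numbers `3r` are distinct modulo `b`, which gives disjointness; since `3 ∣ b`, the union is the set
of `(a, t)` with `a ≡ t (mod 3)`, and since `3 ∣ m` each column `t` contains `m/3` of them.
-/

open Finset

lemma exists_intCast_eq_mul_iff (m : ℕ) (a c : ℤ) :
    (∃ n : ℤ, (c : ZMod m) = ((n * a : ℤ) : ZMod m)) ↔ (Int.gcd a m : ℤ) ∣ c := by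
  simp_rw [ZMod.intCast_eq_intCast_iff_dvd_sub, Int.coe_gcd, gcd_dvd_iff_exists]
  constructor
  · rintro ⟨n, k, hk⟩
    exact ⟨n, -k, by linarith⟩
  · rintro ⟨n, k, hk⟩
    exact ⟨n, -k, by linarith⟩

lemma mem_Cr_iff {m : ℕ} [NeZero m] (l h r : ℕ) (x : ZMod m × Fin l) :
    x ∈ Cr m l h r ↔
      (Int.gcd ((l : ℤ) - h) m : ℤ) ∣ (x.1.val : ℤ) - (x.2 : ℕ) - 3 * r := by
  rw [← exists_intCast_eq_mul_iff]
  constructor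
  · rintro ⟨n, t, rfl⟩
    refine ⟨n, ?_⟩
    push_cast
    rw [ZMod.natCast_val, ZMod.cast_id]
    ring
  · rintro ⟨n, hn⟩
    refine ⟨n, x.2, Prod.ext ?_ rfl⟩
    push_cast at hn ⊢
    rw [ZMod.natCast_zmod_val] at hn
    linear_combination hn

lemma eq_of_dvd_sub_mul_of_lt_div {d k r r' : ℕ} {v : ℤ} (hr : r < d / k) (hr' : r' < d / k)
    (hdr : (d : ℤ) ∣ v - k * r) (hdr' : (d : ℤ) ∣ v - k * r') : r = r' := by
  have hk : 0 < k := Nat.pos_of_ne_zero (by rintro rfl; simp at hr)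
  have hdiv : (d : ℤ) ∣ k * ((r' : ℤ) - r) := by
    rw [show (k : ℤ) * (r' - r) = v - k * r - (v - k * r') by ring]
    exact dvd_sub hdr hdr'
  have hkr : k * r < d := (Nat.mul_lt_mul_of_pos_left hr hk).trans_le (Nat.mul_div_le d k)
  have hkr' : k * r' < d := (Nat.mul_lt_mul_of_pos_left hr' hk).trans_le (Nat.mul_div_le d k)
  have hlt : |(k : ℤ) * ((r' : ℤ) - r)| < d := by
    rw [abs_lt, mul_sub]; constructor <;> omega
  have := Int.eq_zero_of_abs_lt_dvd hdiv hlt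
  simp only [mul_eq_zero, Nat.cast_eq_zero, sub_eq_zero, Nat.cast_inj] at this
  omega

lemma exists_lt_div_dvd_sub_mul_iff {d k : ℕ} (hd : 0 < d) (hk : k ∣ d) (v : ℤ) :
    (∃ r < d / k, (d : ℤ) ∣ v - k * r) ↔ (k : ℤ) ∣ v := by
  obtain ⟨e, rfl⟩ := hk
  have hk : 0 < k := Nat.pos_of_mul_pos_right hd
  rw [Nat.mul_div_cancel_left e hk]
  constructor
  · rintro ⟨r, -, hr⟩
    have := (Int.natCast_dvd_natCast.mpr (Dvd.intro e rfl)).trans hr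
    simpa using (dvd_sub_left (dvd_mul_right (k : ℤ) r)).mp this
  · intro hv
    have hke : (0 : ℤ) < k * e := by exact_mod_cast hd
    obtain ⟨s, hs⟩ : (k : ℤ) ∣ v % (k * e) := by
      rw [Int.emod_def]
      exact dvd_sub hv ((dvd_mul_right _ _).mul_right _)
    have hk' : (0 : ℤ) < k := by exact_mod_cast hk
    have hs0 : 0 ≤ s := nonneg_of_mul_nonneg_right (hs ▸ Int.emod_nonneg v hke.ne') hk'
    have hse : s < e := lt_of_mul_lt_mul_left (hs ▸ Int.emod_lt_of_pos v hke) hk'.le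
    refine ⟨s.toNat, by omega, ?_⟩
    rw [Int.toNat_of_nonneg hs0, ← hs]
    exact_mod_cast Int.dvd_self_sub_emod

lemma card_filter_modEq_val {m k : ℕ} [NeZero m] (hk : k ∣ m) (t : ℕ) :
    #{a : ZMod m | t ≡ a.val [MOD k]} = m / k := by
  have hcard : #{a : ZMod m | t ≡ a.val [MOD k]} = #{n ∈ range m | n ≡ t [MOD k]} := by
    refine card_nbij' ZMod.val (fun n => (n : ZMod m)) ?_ ?_ ?_ ?_
    · intro a ha
      simp_all [ZMod.val_lt, Nat.ModEq.comm]
    · intro n hn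
      rw [mem_coe, mem_filter, mem_range] at hn
      rw [mem_coe, mem_filter, ZMod.val_cast_of_lt hn.1]
      exact ⟨mem_univ _, hn.2.symm⟩
    · intro a _
      exact ZMod.natCast_zmod_val a
    · intro n hn
      exact ZMod.val_cast_of_lt (mem_range.mp (mem_filter.mp hn).1)
  rw [hcard, ← Nat.count_eq_card_filter_range,
    Nat.count_modEq_card _ (Nat.pos_of_dvd_of_pos hk (NeZero.pos m))]
  simp [Nat.mod_eq_zero_of_dvd hk]

lemma card_filter_modEq_val_prod {m k : ℕ} [NeZero m] (hk : k ∣ m) (l : ℕ) :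
    #{x : ZMod m × Fin l | (x.2 : ℕ) ≡ x.1.val [MOD k]} = m * l / k := by
  rw [card_filter, Fintype.sum_prod_type_right]
  simp_rw [← card_filter, card_filter_modEq_val hk]
  rw [sum_const, card_univ, Fintype.card_fin, smul_eq_mul, mul_comm, Nat.div_mul_right_comm hk]

lemma iUnion_Cr_eq {m : ℕ} [NeZero m] (l h : ℕ) (h3 : 3 ∣ Int.gcd ((l : ℤ) - h) m) :
    ⋃ r ∈ range (Int.gcd ((l : ℤ) - h) m / 3), Cr m l h r =
      ↑({x : ZMod m × Fin l | (x.2 : ℕ) ≡ x.1.val [MOD 3]} : Finset _) := by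
  have hd : 0 < Int.gcd ((l : ℤ) - h) m :=
    Int.gcd_pos_of_ne_zero_right _ (by exact_mod_cast NeZero.ne m)
  ext x
  simp only [Set.mem_iUnion, mem_range, exists_prop, mem_Cr_iff, mem_coe, mem_filter, mem_univ,
    true_and, Nat.modEq_iff_dvd]
  exact_mod_cast exists_lt_div_dvd_sub_mul_iff hd h3 _

lemma disjoint_Cr {m : ℕ} [NeZero m] (l h : ℕ) {r r' : ℕ}
    (hr : r < Int.gcd ((l : ℤ) - h) m / 3) (hr' : r' < Int.gcd ((l : ℤ) - h) m / 3)
    (hne : r ≠ r') : Disjoint (Cr m l h r) (Cr m l h r') := by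
  rw [Set.disjoint_left]
  intro x hx hx'
  rw [mem_Cr_iff] at hx hx'
  exact hne (eq_of_dvd_sub_mul_of_lt_div hr hr' (by exact_mod_cast hx) (by exact_mod_cast hx'))

theorem statement10_general (m l h : ℕ) (hm : 0 < m)
    (h3m : 3 ∣ m) (h3 : (3 : ℤ) ∣ ((l : ℤ) - (h : ℤ))) :
    (∀ r r' : ℕ, r < Int.gcd ((l : ℤ) - (h : ℤ)) (m : ℤ) / 3 →
      r' < Int.gcd ((l : ℤ) - (h : ℤ)) (m : ℤ) / 3 → r ≠ r' →
      Cr m l h r ∩ Cr m l h r' = ∅) ∧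
    (⋃ r ∈ Finset.range (Int.gcd ((l : ℤ) - (h : ℤ)) (m : ℤ) / 3),
      Cr m l h r).ncard = m * l / 3 := by
  have : NeZero m := ⟨hm.ne'⟩
  have h3d : 3 ∣ Int.gcd ((l : ℤ) - h) m :=
    Int.natCast_dvd_natCast.mp (Int.dvd_coe_gcd h3 (by exact_mod_cast h3m))
  refine ⟨fun r r' hr hr' hne => Set.disjoint_iff_inter_eq_empty.mp (disjoint_Cr l h hr hr' hne),
    ?_⟩
  rw [iUnion_Cr_eq l h h3d, Set.ncard_coe_finset, card_filter_modEq_val_prod h3m]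

theorem statement10 (m l h : ℕ) (hm : 0 < m) (hl : 0 < l) (hhm : h < m)
    (h3m : 3 ∣ m) (h3 : (3 : ℤ) ∣ ((l : ℤ) - (h : ℤ))) :
    (∀ r r' : ℕ, r < Int.gcd ((l : ℤ) - (h : ℤ)) (m : ℤ) / 3 →
      r' < Int.gcd ((l : ℤ) - (h : ℤ)) (m : ℤ) / 3 → r ≠ r' →
      Cr m l h r ∩ Cr m l h r' = ∅) ∧
    (⋃ r ∈ Finset.range (Int.gcd ((l : ℤ) - (h : ℤ)) (m : ℤ) / 3),
      Cr m l h r).ncard = m * l / 3 :=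
  statement10_general m l h hm h3m h3
end

section
/- Let G be a finite abelian group generated by S = {s, s'} ⊆ G \ {0} with s ≠ s', let m be the order of s, let l be the minimal positive integer with l·s' ∈ ⟨s⟩, and let h be the unique integer with 0 ≤ h < m and h·s + l·s' = 0. Then the Cayley digraph Cay(G,S) is isomorphic (as a digraph) to Γ_{m,l,h}. -/
/-!
The map `(a, t) ↦ a • s + t • s'` from `ℤ_m × [l]` to `G` is a bijection: it is injective because
no `t • s'` with `0 < t < l` lies in `⟨s⟩`, and surjective because `l • s' ∈ ⟨s⟩` lets the
coefficient of `s'` be reduced modulo `l`. Adding `s` moves along the first coordinate and adding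
`s'` raises the second one, except at level `l - 1`, where `l • s' = -h • s` sends `(a, l - 1)`
to `(a - h, 0)`: these are exactly the arcs of `Γ_{m,l,h}`.
-/

theorem DigraphIso.symm {V W : Type*} {arcV : V → V → Prop} {arcW : W → W → Prop}
    (hVW : DigraphIso arcV arcW) : DigraphIso arcW arcV := by
  obtain ⟨e, he⟩ := hVW
  exact ⟨e.symm, fun x y => by simpa using (he (e.symm x) (e.symm y)).symm⟩

section CayleyTwoGenerators

variable {G : Type*} [AddCommGroup G]

noncomputable def zmodMultiplesHom (s : G) : ZMod (addOrderOf s) →+ G :=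
  ZMod.lift _ ⟨zmultiplesHom G s, by simp [addOrderOf_nsmul_eq_zero]⟩

variable {s s' : G}

@[simp]
theorem zmodMultiplesHom_intCast (k : ℤ) : zmodMultiplesHom s k = k • s :=
  ZMod.lift_coe _ _ k

@[simp]
theorem zmodMultiplesHom_natCast (k : ℕ) : zmodMultiplesHom s k = k • s := by
  simpa using zmodMultiplesHom_intCast (s := s) k

theorem zmodMultiplesHom_injective : Function.Injective (zmodMultiplesHom s) := by
  refine (injective_iff_map_eq_zero _).2 fun a ha => ?_
  obtain ⟨k, rfl⟩ := ZMod.intCast_surjective a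
  rw [zmodMultiplesHom_intCast, ← addOrderOf_dvd_iff_zsmul_eq_zero] at ha
  exact (ZMod.intCast_zmod_eq_zero_iff_dvd k _).2 ha

theorem zmodMultiplesHom_mem_zmultiples (a : ZMod (addOrderOf s)) :
    zmodMultiplesHom s a ∈ AddSubgroup.zmultiples s := by
  obtain ⟨k, rfl⟩ := ZMod.intCast_surjective a
  simp [AddSubgroup.zsmul_mem_zmultiples]

noncomputable def gammaMap (s s' : G) (l : ℕ) (x : ZMod (addOrderOf s) × Fin l) : G :=
  zmodMultiplesHom s x.1 + (x.2 : ℕ) • s'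

theorem eq_of_add_nsmul_eq_add_nsmul {l : ℕ}
    (hl : l ∈ lowerBounds {n : ℕ | 0 < n ∧ (n : ℤ) • s' ∈ AddSubgroup.zmultiples s})
    {x y : G} (hx : x ∈ AddSubgroup.zmultiples s) (hy : y ∈ AddSubgroup.zmultiples s)
    {t t' : Fin l} (htt' : t ≤ t') (he : x + (t : ℕ) • s' = y + (t' : ℕ) • s') : t = t' := by
  by_contra hne
  have hlt : (t : ℕ) < t' := lt_of_le_of_ne htt' (Fin.val_ne_of_ne hne)
  have hdiff : ((t' - t : ℕ) : ℤ) • s' = x - y := by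
    rw [natCast_zsmul, sub_nsmul _ hlt.le, ← sub_eq_add_neg, sub_eq_sub_iff_add_eq_add, he,
      add_comm]
  have := hl ⟨Nat.sub_pos_of_lt hlt, hdiff ▸ sub_mem hx hy⟩
  omega

theorem gammaMap_injective {l : ℕ}
    (hl : l ∈ lowerBounds {n : ℕ | 0 < n ∧ (n : ℤ) • s' ∈ AddSubgroup.zmultiples s}) :
    Function.Injective (gammaMap s s' l) := by
  rintro ⟨a, t⟩ ⟨a', t'⟩ he
  have ht : t = t' := by
    rcases le_total t t' with htt' | htt'
    · exact eq_of_add_nsmul_eq_add_nsmul hl (zmodMultiplesHom_mem_zmultiples a)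
        (zmodMultiplesHom_mem_zmultiples a') htt' he
    · exact (eq_of_add_nsmul_eq_add_nsmul hl (zmodMultiplesHom_mem_zmultiples a')
        (zmodMultiplesHom_mem_zmultiples a) htt' he.symm).symm
  subst ht
  simpa using zmodMultiplesHom_injective (add_right_cancel he)

theorem gammaMap_surjective {l : ℕ} (hgen : AddSubgroup.closure {s, s'} = ⊤) (hl0 : 0 < l)
    (hls : (l : ℤ) • s' ∈ AddSubgroup.zmultiples s) :
    Function.Surjective (gammaMap s s' l) := by
  intro g
  obtain ⟨i, j, rfl⟩ := AddSubgroup.mem_closure_pair.1 (hgen ▸ AddSubgroup.mem_top g)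
  obtain ⟨k, hk⟩ := AddSubgroup.mem_zmultiples_iff.1 hls
  have hr : 0 ≤ j % l := Int.emod_nonneg j (by omega)
  have hrl : j % l < l := Int.emod_lt_of_pos j (by omega)
  refine ⟨(((i + j / l * k : ℤ) : ZMod (addOrderOf s)), ⟨(j % l).toNat, by omega⟩), ?_⟩
  have hj : j • s' = (j / l * k) • s + (j % l) • s' := by
    rw [mul_zsmul, hk, ← mul_zsmul, mul_comm, ← add_zsmul, Int.mul_ediv_add_emod]
  rw [gammaMap, zmodMultiplesHom_intCast, ← natCast_zsmul, Int.toNat_of_nonneg hr, hj, add_zsmul,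
    add_assoc]

def gammaNext {m l : ℕ} (h : ℕ) (x : ZMod m × Fin l) : ZMod m × Fin l :=
  if ht : (x.2 : ℕ) + 1 < l then (x.1, ⟨x.2 + 1, ht⟩) else (x.1 - h, ⟨0, x.2.pos⟩)

theorem gammaArc_iff {m l h : ℕ} {x y : ZMod m × Fin l} :
    gammaArc m l h x y ↔ y = (x.1 + 1, x.2) ∨ y = gammaNext h x := by
  unfold gammaArc gammaNext
  have := x.2.isLt
  split_ifs with ht <;> simp only [Prod.ext_iff, Fin.ext_iff] <;> grind

theorem gammaMap_add_one_fst {l : ℕ} (x : ZMod (addOrderOf s) × Fin l) :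
    gammaMap s s' l (x.1 + 1, x.2) = gammaMap s s' l x + s := by
  simp only [gammaMap, map_add, ← Nat.cast_one (R := ZMod _), zmodMultiplesHom_natCast, one_smul]
  abel

theorem gammaMap_gammaNext {l h : ℕ} (hh : (h : ℤ) • s + (l : ℤ) • s' = 0)
    (x : ZMod (addOrderOf s) × Fin l) :
    gammaMap s s' l (gammaNext h x) = gammaMap s s' l x + s' := by
  unfold gammaNext
  split_ifs with ht
  · simp only [gammaMap, succ_nsmul, add_assoc]
  · have hl : (x.2 : ℕ) + 1 = l := by omega
    rw [natCast_zsmul, natCast_zsmul] at hh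
    simp only [gammaMap, map_sub, zmodMultiplesHom_natCast, zero_smul, add_zero]
    rw [add_assoc, ← succ_nsmul, hl, eq_neg_of_add_eq_zero_right hh, sub_eq_add_neg]

theorem cayArc_gammaMap_iff {l h : ℕ} (hinj : Function.Injective (gammaMap s s' l))
    (hh : (h : ℤ) • s + (l : ℤ) • s' = 0) (x y : ZMod (addOrderOf s) × Fin l) :
    cayArc {s, s'} (gammaMap s s' l x) (gammaMap s s' l y) ↔ gammaArc _ l h x y := by
  rw [cayArc, Set.mem_insert_iff, Set.mem_singleton_iff, sub_eq_iff_eq_add', sub_eq_iff_eq_add',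
    ← gammaMap_add_one_fst, ← gammaMap_gammaNext hh, hinj.eq_iff, hinj.eq_iff, gammaArc_iff]

end CayleyTwoGenerators

theorem statement15_general {G : Type*} [AddCommGroup G] (s s' : G)
    (hgen : AddSubgroup.closure {s, s'} = ⊤)
    (m l h : ℕ) (hm : m = addOrderOf s)
    (hl : IsLeast {n : ℕ | 0 < n ∧ (n : ℤ) • s' ∈ AddSubgroup.zmultiples s} l)
    (hh : (h : ℤ) • s + (l : ℤ) • s' = 0) :
    DigraphIso (cayArc {s, s'}) (gammaArc m l h) := by
  subst hm
  have hinj := gammaMap_injective hl.2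
  have hsurj := gammaMap_surjective hgen hl.1.1 hl.1.2
  exact DigraphIso.symm
    ⟨Equiv.ofBijective _ ⟨hinj, hsurj⟩, fun x y => (cayArc_gammaMap_iff hinj hh x y).symm⟩

theorem statement15 {G : Type*} [AddCommGroup G] [Fintype G] (s s' : G)
    (hs : s ≠ 0) (hs' : s' ≠ 0) (hne : s ≠ s')
    (hgen : AddSubgroup.closure {s, s'} = ⊤)
    (m l h : ℕ) (hm : m = addOrderOf s)
    (hl : IsLeast {n : ℕ | 0 < n ∧ (n : ℤ) • s' ∈ AddSubgroup.zmultiples s} l)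
    (hhm : h < m) (hh : (h : ℤ) • s + (l : ℤ) • s' = 0) :
    DigraphIso (cayArc {s, s'}) (gammaArc m l h) :=
  statement15_general s s' hgen m l h hm hl hh
end
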